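/- For any nonzero positive semidefinite matrices ρ and σ of the same size, D(ρ‖σ) ≥ −2·log₂(F(ρ, σ)/tr ρ). -/

import Mathlib

open scoped BigOperators ComplexOrder
open Matrix Filter MeasureTheory

noncomputable section

namespace QMarkov

variable {ι : Type*}

/-- Positive semidefinite square root of a matrix (junk value `0` if not PSD). -/
noncomputable def matSqrt [Fintype ι] (A : Matrix ι ι ℂ) : Matrix ι ι ℂ := by
  classical exact if h : A.PosSemidef then
      (h.1.eigenvectorUnitary : Matrix ι ι ℂ) *
        Matrix.diagonal (fun i => ((Real.sqrt (h.1.eigenvalues i) : ℝ) : ℂ)) *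
        (star h.1.eigenvectorUnitary : Matrix ι ι ℂ)
    else 0

/-- Trace norm (sum of singular values). -/
noncomputable def traceNorm [Fintype ι] (A : Matrix ι ι ℂ) : ℝ :=
  (matSqrt (Aᴴ * A)).trace.re

/-- Fidelity `F(ρ,σ) = ‖√ρ √σ‖₁`. -/
noncomputable def fid [Fintype ι] (ρ σ : Matrix ι ι ℂ) : ℝ :=
  traceNorm (matSqrt ρ * matSqrt σ)

/-- Generalized trace distance `Δ(ρ,σ) = ½‖ρ-σ‖₁ + ½|tr(ρ-σ)|`. -/
noncomputable def tdist [Fintype ι] (ρ σ : Matrix ι ι ℂ) : ℝ :=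
  (1 / 2) * traceNorm (ρ - σ) + (1 / 2) * ‖(ρ - σ).trace‖

/-- Von Neumann entropy `H(ρ) = -∑ᵢ λᵢ log₂ λᵢ` (junk `0` if not Hermitian);
the convention `0 · log₂ 0 = 0` is automatic since `Real.logb 2 0 = 0`. -/
noncomputable def vnEntropy [Fintype ι] (A : Matrix ι ι ℂ) : ℝ := by
  classical exact
    if h : A.IsHermitian then -∑ i, h.eigenvalues i * Real.logb 2 (h.eigenvalues i) else 0

/-- Matrix base-2 logarithm on the support of a Hermitian matrix (junk `0` if not Hermitian). -/
noncomputable def mlog [Fintype ι] (A : Matrix ι ι ℂ) : Matrix ι ι ℂ := by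
  classical exact
    if h : A.IsHermitian then
      (h.eigenvectorUnitary : Matrix ι ι ℂ) *
        Matrix.diagonal (fun i => (Real.logb 2 (h.eigenvalues i) : ℂ)) *
        (h.eigenvectorUnitary : Matrix ι ι ℂ)ᴴ
    else 0

/-- Square root of the Moore–Penrose pseudoinverse of a Hermitian PSD matrix
(junk `0` if not Hermitian). -/
noncomputable def pinvSqrt [Fintype ι] (A : Matrix ι ι ℂ) : Matrix ι ι ℂ := by
  classical exact
    if h : A.IsHermitian then
      (h.eigenvectorUnitary : Matrix ι ι ℂ) *
        Matrix.diagonal (fun i => ((Real.sqrt (h.eigenvalues i))⁻¹ : ℂ)) *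
        (h.eigenvectorUnitary : Matrix ι ι ℂ)ᴴ
    else 0

/-- Relative entropy `D(ρ‖σ)`, equal to `tr(ρ(log₂ρ - log₂σ))/tr ρ` when the support of
`ρ` is contained in the support of `σ`, and `+∞` otherwise. -/
noncomputable def relEnt [Fintype ι] (ρ σ : Matrix ι ι ℂ) : EReal := by
  classical exact
    if ∀ v : ι → ℂ, σ *ᵥ v = 0 → ρ *ᵥ v = 0 then
      (((ρ * (mlog ρ - mlog σ)).trace.re / ρ.trace.re : ℝ) : EReal)
    else ⊤

/-- `n`-fold tensor power of a matrix. -/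
def tpow (A : Matrix ι ι ℂ) (n : ℕ) : Matrix (Fin n → ι) (Fin n → ι) ℂ :=
  Matrix.of fun x y => ∏ i, A (x i) (y i)

/-- Permutation invariance of a matrix on an `n`-fold tensor power space. -/
def permInv {n : ℕ} (ρ : Matrix (Fin n → ι) (Fin n → ι) ℂ) : Prop :=
  ∀ π : Equiv.Perm (Fin n), ∀ x y, ρ (x ∘ π) (y ∘ π) = ρ x y

/-- Rank-one projector `|φ⟩⟨φ|`. -/
def vecOuter (φ : ι → ℂ) : Matrix ι ι ℂ :=
  Matrix.of fun i j => φ i * star (φ j)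

variable {A B C D E : Type*}

/-- Partial trace over the second factor. -/
def ptr2 [Fintype E] (M : Matrix (D × E) (D × E) ℂ) : Matrix D D ℂ :=
  Matrix.of fun d d' => ∑ e, M (d, e) (d', e)

/-- Partial trace over the `n` copies of `E` of a matrix on `(D ⊗ E)^⊗n`. -/
def ptrPow [Fintype E] {n : ℕ} (M : Matrix (Fin n → D × E) (Fin n → D × E) ℂ) :
    Matrix (Fin n → D) (Fin n → D) ℂ :=
  Matrix.of fun x y => ∑ e : Fin n → E, M (fun i => (x i, e i)) (fun i => (y i, e i))

/-- Marginal `ρ_AB` of a tripartite matrix. -/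
def margAB [Fintype C] (ρ : Matrix (A × B × C) (A × B × C) ℂ) : Matrix (A × B) (A × B) ℂ :=
  Matrix.of fun x y => ∑ c, ρ (x.1, x.2, c) (y.1, y.2, c)

/-- Marginal `ρ_BC` of a tripartite matrix. -/
def margBC [Fintype A] (ρ : Matrix (A × B × C) (A × B × C) ℂ) : Matrix (B × C) (B × C) ℂ :=
  Matrix.of fun x y => ∑ a, ρ (a, x.1, x.2) (a, y.1, y.2)

/-- Marginal `ρ_B` of a tripartite matrix. -/
def margB [Fintype A] [Fintype C] (ρ : Matrix (A × B × C) (A × B × C) ℂ) : Matrix B B ℂ :=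
  Matrix.of fun b b' => ∑ a, ∑ c, ρ (a, b, c) (a, b', c)

/-- Conditional mutual information `I(A:C|B)_ρ = H(ρ_AB) + H(ρ_BC) - H(ρ_B) - H(ρ_ABC)`. -/
noncomputable def cmi [Fintype A] [Fintype B] [Fintype C]
    (ρ : Matrix (A × B × C) (A × B × C) ℂ) : ℝ :=
  vnEntropy (margAB ρ) + vnEntropy (margBC ρ) - vnEntropy (margB ρ) - vnEntropy ρ

/-- Application of `I_A ⊗ T` to a matrix on `A ⊗ B`, for `T` a map from matrices over `B`
to matrices over `B ⊗ C`. -/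
def extT (T : Matrix B B ℂ → Matrix (B × C) (B × C) ℂ)
    (ρ : Matrix (A × B) (A × B) ℂ) : Matrix (A × B × C) (A × B × C) ℂ :=
  Matrix.of fun x y => T (Matrix.of fun b b' => ρ (x.1, b) (y.1, b')) x.2 y.2

/-- `M ⊗ id` on `B ⊗ C`. -/
def kronId (M : Matrix B B ℂ) : Matrix (B × C) (B × C) ℂ := by
  classical exact Matrix.of fun x y => if x.2 = y.2 then M x.1 y.1 else 0

end QMarkov

namespace QMarkov
variable {A B C : Type*}

/-- Marginal on the first and third factors of a tripartite matrix. -/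
def marg13 [Fintype B] (ρ : Matrix (A × B × C) (A × B × C) ℂ) : Matrix (A × C) (A × C) ℂ :=
  Matrix.of fun x y => ∑ b, ρ (x.1, b, x.2) (y.1, b, y.2)

/-- Marginal on the third factor of a tripartite matrix. -/
def marg3 [Fintype A] [Fintype B] (ρ : Matrix (A × B × C) (A × B × C) ℂ) : Matrix C C ℂ :=
  Matrix.of fun c c' => ∑ a, ∑ b, ρ (a, b, c) (a, b, c')

/-- Conditional mutual information `I(first : second | third)` of a tripartite matrix, i.e.
for `ρ` on `A ⊗ C ⊗ E` this is `I(A:C|E)_ρ = H(ρ_AE) + H(ρ_CE) - H(ρ_E) - H(ρ_ACE)`. -/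
noncomputable def cmi13 [Fintype A] [Fintype B] [Fintype C]
    (ρ : Matrix (A × B × C) (A × B × C) ℂ) : ℝ :=
  vnEntropy (marg13 ρ) + vnEntropy (margBC ρ) - vnEntropy (marg3 ρ) - vnEntropy ρ

end QMarkov

/-! Diagonalize `ρ = ∑ pᵢ |aᵢ⟩⟨aᵢ|` and `σ = ∑ qⱼ |bⱼ⟩⟨bⱼ|` and put `cᵢⱼ = |⟨aᵢ, bⱼ⟩|²`, whose rows
sum to `1`. Then `tr ρ = ∑ cᵢⱼ pᵢ`, `tr ρ (log ρ - log σ) = ∑ cᵢⱼ pᵢ (log pᵢ - log qⱼ)` and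
`Re tr (√ρ √σ) = ∑ cᵢⱼ √pᵢ √qⱼ ≤ F(ρ, σ)`, while the support condition forces `cᵢⱼ pᵢ = 0` whenever
`qⱼ = 0`. This leaves a classical inequality between the weighted sums `T = ∑ cᵢⱼ pᵢ` and
`S = ∑ cᵢⱼ √pᵢ √qⱼ`, which follows term by term from `log u ≤ u - 1` at
`u = √(qⱼ / pᵢ) / (S / T)`. -/

open Real

namespace Real

theorem neg_two_mul_le_mul_log_sub_log {w x y m : ℝ} (hw : 0 ≤ w) (hx : 0 ≤ x) (hy : 0 ≤ y)
    (hxy : y = 0 → w * x = 0) (hm : 0 < m) :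
    -2 * (w * √x * √y / m - w * x + w * x * log m) ≤ w * x * (log x - log y) := by
  rcases (mul_nonneg hw hx).eq_or_lt with hwx | hwx
  · rcases mul_eq_zero.mp hwx.symm with h | h <;> simp [h]
  have hsx : 0 < √x := sqrt_pos.mpr (pos_of_mul_pos_right hwx hw)
  have hsy : 0 < √y := sqrt_pos.mpr (hy.lt_of_ne fun h => hwx.ne' (hxy h.symm))
  have hratio : w * x * (√y / (√x * m)) = w * √x * √y / m := by
    nth_rw 1 [← mul_self_sqrt hx]
    field_simp
  have key : w * x * log (√y / (√x * m)) ≤ w * √x * √y / m - w * x := by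
    have := mul_le_mul_of_nonneg_left
      (log_le_sub_one_of_pos (x := √y / (√x * m)) (by positivity)) hwx.le
    rwa [mul_sub, mul_one, hratio] at this
  rw [log_div hsy.ne' (by positivity), log_mul hsx.ne' hm.ne', log_sqrt hx, log_sqrt hy] at key
  linarith

section WeightedSums

variable {κ : Type*} [Fintype κ] {w x y : κ → ℝ}

theorem sum_mul_sqrt_mul_sqrt_pos (hw : ∀ k, 0 ≤ w k) (hx : ∀ k, 0 ≤ x k) (hy : ∀ k, 0 ≤ y k)
    (hxy : ∀ k, y k = 0 → w k * x k = 0) (hT : 0 < ∑ k, w k * x k) :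
    0 < ∑ k, w k * √(x k) * √(y k) := by
  obtain ⟨k, -, hk⟩ := Finset.exists_lt_of_sum_lt (by simpa using hT : ∑ k, (0 : ℝ) < _)
  have hwk : 0 < w k := pos_of_mul_pos_left hk (hx k)
  have hxk : 0 < √(x k) := sqrt_pos.mpr (pos_of_mul_pos_right hk (hw k))
  have hyk : 0 < √(y k) := sqrt_pos.mpr ((hy k).lt_of_ne fun h => hk.ne' (hxy k h.symm))
  exact Finset.sum_pos' (fun k _ => by have := hw k; positivity)
    ⟨k, Finset.mem_univ _, by positivity⟩

theorem neg_two_mul_log_le_sum_mul_log_sub_log (hw : ∀ k, 0 ≤ w k) (hx : ∀ k, 0 ≤ x k)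
    (hy : ∀ k, 0 ≤ y k) (hxy : ∀ k, y k = 0 → w k * x k = 0) (hT : 0 < ∑ k, w k * x k) :
    -2 * (∑ k, w k * x k) * log ((∑ k, w k * √(x k) * √(y k)) / ∑ k, w k * x k)
      ≤ ∑ k, w k * x k * (log (x k) - log (y k)) := by
  have hS := sum_mul_sqrt_mul_sqrt_pos hw hx hy hxy hT
  refine le_trans (le_of_eq ?_) (Finset.sum_le_sum fun k _ =>
    neg_two_mul_le_mul_log_sub_log (hw k) (hx k) (hy k) (hxy k) (div_pos hS hT))
  rw [← Finset.mul_sum, Finset.sum_add_distrib, Finset.sum_sub_distrib, ← Finset.sum_div,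
    ← Finset.sum_mul]
  field_simp
  ring

end WeightedSums

end Real

namespace Matrix

variable {ι : Type*} [Fintype ι]

theorem conjTranspose_mul_self_apply_self (M : Matrix ι ι ℂ) (j : ι) :
    (Mᴴ * M) j j = ∑ k, ((‖M k j‖ ^ 2 : ℝ) : ℂ) := by
  simp only [mul_apply, conjTranspose_apply, Complex.ofReal_pow, ← Complex.mul_conj', mul_comm,
    Complex.star_def]

theorem sq_norm_apply_le_re_conjTranspose_mul_self (M : Matrix ι ι ℂ) (i j : ι) :
    ‖M i j‖ ^ 2 ≤ ((Mᴴ * M) j j).re := by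
  rw [conjTranspose_mul_self_apply_self, ← Complex.ofReal_sum, Complex.ofReal_re]
  exact Finset.single_le_sum (f := fun k => ‖M k j‖ ^ 2) (fun k _ => sq_nonneg _)
    (Finset.mem_univ i)

theorem PosSemidef.re_trace_pos {A : Matrix ι ι ℂ} (hA : A.PosSemidef) (h0 : A ≠ 0) :
    0 < A.trace.re :=
  (Complex.pos_iff.mp (hA.trace_nonneg.lt_of_ne (Ne.symm (mt hA.trace_eq_zero_iff.mp h0)))).1

variable [DecidableEq ι]

theorem sum_sq_norm_apply_of_mem_unitaryGroup {W : Matrix ι ι ℂ} (hW : W ∈ unitaryGroup ι ℂ)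
    (i : ι) : ∑ j, ‖W i j‖ ^ 2 = 1 := by
  have := conjTranspose_mul_self_apply_self Wᴴ i
  rw [conjTranspose_conjTranspose, ← star_eq_conjTranspose, mem_unitaryGroup_iff.mp hW,
    one_apply_eq, ← Complex.ofReal_sum] at this
  simpa [conjTranspose_apply] using (Complex.ofReal_injective this).symm

theorem trace_conj_diagonal_mul_conj_diagonal (U V : unitaryGroup ι ℂ) (a b : ι → ℝ) :
    ((U : Matrix ι ι ℂ) * diagonal (fun i => (a i : ℂ)) * star (U : Matrix ι ι ℂ) *
        ((V : Matrix ι ι ℂ) * diagonal (fun j => (b j : ℂ)) * star (V : Matrix ι ι ℂ))).trace =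
      ∑ i, ∑ j, ((a i * b j * ‖(star (U : Matrix ι ι ℂ) * V) i j‖ ^ 2 : ℝ) : ℂ) := by
  set W := star (U : Matrix ι ι ℂ) * V
  have hcycle : ((U : Matrix ι ι ℂ) * diagonal (fun i => (a i : ℂ)) * star (U : Matrix ι ι ℂ) *
      ((V : Matrix ι ι ℂ) * diagonal (fun j => (b j : ℂ)) * star (V : Matrix ι ι ℂ))).trace =
      (diagonal (fun i => (a i : ℂ)) * W * diagonal (fun j => (b j : ℂ)) * star W).trace := by
    simp only [Matrix.mul_assoc]
    rw [trace_mul_comm]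
    simp only [W, star_mul, star_star, Matrix.mul_assoc]
  have hentry : ∀ i j, (diagonal (fun i => (a i : ℂ)) * W * diagonal (fun j => (b j : ℂ))) i j =
      a i * W i j * b j := fun i j => by rw [mul_diagonal, diagonal_mul]
  rw [hcycle, trace]
  refine Finset.sum_congr rfl fun i _ => ?_
  rw [diag_apply, mul_apply]
  refine Finset.sum_congr rfl fun j _ => ?_
  rw [hentry, star_apply, Complex.star_def]
  push_cast
  rw [← Complex.mul_conj' (W i j)]
  ring

namespace IsHermitian

variable {A B : Matrix ι ι ℂ}

theorem trace_cfc (hA : A.IsHermitian) (f : ℝ → ℝ) :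
    (hA.cfc f).trace = ∑ i, (f (hA.eigenvalues i) : ℂ) := by
  rw [IsHermitian.cfc, Unitary.conjStarAlgAut_apply, trace_mul_cycle, Unitary.coe_star_mul_self,
    Matrix.one_mul, trace_diagonal]
  rfl

theorem star_eigenvectorUnitary_mul (hA : A.IsHermitian) :
    star (hA.eigenvectorUnitary : Matrix ι ι ℂ) * A =
      diagonal (fun i => (hA.eigenvalues i : ℂ)) * star (hA.eigenvectorUnitary : Matrix ι ι ℂ) := by
  have hdiag := hA.conjStarAlgAut_star_eigenvectorUnitary
  rw [Unitary.conjStarAlgAut_apply, Unitary.coe_star, star_star] at hdiag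
  rw [← Matrix.mul_one (_ * A), ← Unitary.coe_mul_star_self hA.eigenvectorUnitary,
    ← Matrix.mul_assoc, hdiag]
  rfl

/-- `|⟨aᵢ, bⱼ⟩|²` for the eigenvector bases `a` of `A` and `b` of `B`. -/
def eigenOverlap (hA : A.IsHermitian) (hB : B.IsHermitian) (i j : ι) : ℝ :=
  ‖(star (hA.eigenvectorUnitary : Matrix ι ι ℂ) * hB.eigenvectorUnitary) i j‖ ^ 2

theorem sum_eigenOverlap (hA : A.IsHermitian) (hB : B.IsHermitian) (i : ι) :
    ∑ j, hA.eigenOverlap hB i j = 1 :=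
  sum_sq_norm_apply_of_mem_unitaryGroup (star hA.eigenvectorUnitary * hB.eigenvectorUnitary).2 i

theorem re_trace_eq_sum_eigenOverlap_mul (hA : A.IsHermitian) (hB : B.IsHermitian) :
    A.trace.re = ∑ k : ι × ι, hA.eigenOverlap hB k.1 k.2 * hA.eigenvalues k.1 := by
  rw [hA.trace_eq_sum_eigenvalues, Complex.re_sum, Fintype.sum_prod_type]
  simp only [← Finset.sum_mul, sum_eigenOverlap, one_mul]
  rfl

theorem eigenOverlap_self (hA : A.IsHermitian) (i j : ι) :
    hA.eigenOverlap hA i j = if i = j then 1 else 0 := by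
  rw [eigenOverlap, Unitary.coe_star_mul_self, one_apply]
  split_ifs <;> simp

theorem re_trace_cfc_mul_cfc (hA : A.IsHermitian) (hB : B.IsHermitian) (f g : ℝ → ℝ) :
    (hA.cfc f * hB.cfc g).trace.re =
      ∑ k : ι × ι,
        hA.eigenOverlap hB k.1 k.2 * f (hA.eigenvalues k.1) * g (hB.eigenvalues k.2) := by
  refine (congrArg Complex.re (trace_conj_diagonal_mul_conj_diagonal hA.eigenvectorUnitary
    hB.eigenvectorUnitary (f ∘ hA.eigenvalues) (g ∘ hB.eigenvalues))).trans ?_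
  simp only [Fintype.sum_prod_type, Complex.re_sum, Complex.ofReal_re, eigenOverlap,
    Function.comp_apply]
  refine Finset.sum_congr rfl fun i _ => Finset.sum_congr rfl fun j _ => ?_
  ring

theorem re_trace_mul_cfc (hA : A.IsHermitian) (hB : B.IsHermitian) (g : ℝ → ℝ) :
    (A * hB.cfc g).trace.re =
      ∑ k : ι × ι, hA.eigenOverlap hB k.1 k.2 * hA.eigenvalues k.1 * g (hB.eigenvalues k.2) := by
  conv_lhs => rw [hA.spectral_theorem]
  exact hA.re_trace_cfc_mul_cfc hB id g

theorem eigenvalues_mul_eigenOverlap_eq_zero (hA : A.IsHermitian) (hB : B.IsHermitian)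
    (hker : ∀ v, B *ᵥ v = 0 → A *ᵥ v = 0) {i j : ι} (hj : hB.eigenvalues j = 0) :
    hA.eigenvalues i * hA.eigenOverlap hB i j = 0 := by
  set U : Matrix ι ι ℂ := (hA.eigenvectorUnitary : Matrix ι ι ℂ)
  set v : ι → ℂ := ⇑(hB.eigenvectorBasis j)
  have hAv : A *ᵥ v = 0 := hker v (by rw [hB.mulVec_eigenvectorBasis, hj, zero_smul])
  have hentry : (star U * hB.eigenvectorUnitary) i j = (star U *ᵥ v) i := by
    simp only [mul_apply, mulVec, dotProduct, v, eigenvectorUnitary_apply]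
  have hzero : (hA.eigenvalues i : ℂ) * (star U *ᵥ v) i = 0 := by
    have := congrFun (congrArg (star U *ᵥ ·) hAv) i
    rwa [mulVec_mulVec, star_eigenvectorUnitary_mul, ← mulVec_mulVec, mulVec_diagonal,
      mulVec_zero] at this
  rw [eigenOverlap, hentry]
  rcases mul_eq_zero.mp hzero with h | h
  · rw [Complex.ofReal_eq_zero.mp h, zero_mul]
  · rw [h, norm_zero, zero_pow two_ne_zero, mul_zero]

end IsHermitian

end Matrix

namespace QMarkov

section
variable {ι : Type*} [Fintype ι] [DecidableEq ι]

-- `mlog` and `matSqrt` are defined with classical decidability of equality on `ι`.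
theorem mlog_eq_cfc {A : Matrix ι ι ℂ} (hA : A.IsHermitian) : mlog A = hA.cfc (logb 2) := by
  obtain rfl : ‹DecidableEq ι› = fun a b => Classical.propDecidable (a = b) :=
    Subsingleton.elim _ _
  rw [mlog, dif_pos hA]
  rfl

theorem matSqrt_eq_cfc {A : Matrix ι ι ℂ} (hA : A.PosSemidef) : matSqrt A = hA.1.cfc sqrt := by
  obtain rfl : ‹DecidableEq ι› = fun a b => Classical.propDecidable (a = b) :=
    Subsingleton.elim _ _
  rw [matSqrt, dif_pos hA]
  rfl

end

-- In the eigenbasis of `Xᴴ X` the diagonal entries of `X` are bounded by the column norms,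
-- which are the square roots of the eigenvalues.
theorem re_trace_le_traceNorm {ι : Type*} [Fintype ι] (X : Matrix ι ι ℂ) :
    X.trace.re ≤ traceNorm X := by
  classical
  have hM := posSemidef_conjTranspose_mul_self X
  set V : Matrix ι ι ℂ := (hM.1.eigenvectorUnitary : Matrix ι ι ℂ)
  have hVV : V * star V = 1 := Unitary.coe_mul_star_self _
  have hVV' : star V * V = 1 := Unitary.coe_star_mul_self _
  set Y := star V * X * V
  have hY : Yᴴ * Y = diagonal (fun i => (hM.1.eigenvalues i : ℂ)) := by
    calc Yᴴ * Y = star V * (Xᴴ * X) * V := by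
          simp only [Y, ← star_eq_conjTranspose, star_mul, star_star, Matrix.mul_assoc]
          rw [← Matrix.mul_assoc V, hVV, Matrix.one_mul]
      _ = _ := by rw [hM.1.star_eigenvectorUnitary_mul, Matrix.mul_assoc, hVV', Matrix.mul_one]
  have htr : X.trace = Y.trace := by rw [trace_mul_cycle, hVV, Matrix.one_mul]
  rw [traceNorm, matSqrt_eq_cfc hM, hM.1.trace_cfc, htr, trace, Complex.re_sum, Complex.re_sum]
  refine Finset.sum_le_sum fun i _ => ?_
  calc (Y i i).re ≤ ‖Y i i‖ := Complex.re_le_norm _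
    _ = √(‖Y i i‖ ^ 2) := (sqrt_sq (norm_nonneg _)).symm
    _ ≤ √((Yᴴ * Y) i i).re := sqrt_le_sqrt (sq_norm_apply_le_re_conjTranspose_mul_self Y i i)
    _ = (√(hM.1.eigenvalues i) : ℂ).re := by
      rw [hY, diagonal_apply_eq, Complex.ofReal_re, Complex.ofReal_re]

theorem re_trace_mul_sub_mlog {ι : Type*} [Fintype ι] [DecidableEq ι] {A B : Matrix ι ι ℂ}
    (hA : A.IsHermitian) (hB : B.IsHermitian) :
    (A * (mlog A - mlog B)).trace.re = (∑ k : ι × ι, hA.eigenOverlap hB k.1 k.2 *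
      hA.eigenvalues k.1 * (log (hA.eigenvalues k.1) - log (hB.eigenvalues k.2))) / log 2 := by
  have hAA : (A * mlog A).trace.re = ∑ k : ι × ι,
      hA.eigenOverlap hB k.1 k.2 * hA.eigenvalues k.1 * logb 2 (hA.eigenvalues k.1) := by
    rw [mlog_eq_cfc hA, hA.re_trace_mul_cfc hA]
    simp only [Fintype.sum_prod_type, IsHermitian.eigenOverlap_self, ite_mul, one_mul, zero_mul,
      Finset.sum_ite_eq, Finset.mem_univ, if_true, ← Finset.sum_mul, IsHermitian.sum_eigenOverlap]
  rw [Matrix.mul_sub, trace_sub, Complex.sub_re, hAA, mlog_eq_cfc hB, hA.re_trace_mul_cfc hB,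
    ← Finset.sum_sub_distrib, Finset.sum_div]
  refine Finset.sum_congr rfl fun k _ => ?_
  rw [logb, logb]
  ring

theorem neg_two_mul_logb_fid_div_le {ι : Type*} [Fintype ι] {ρ σ : Matrix ι ι ℂ}
    (hρ : ρ.PosSemidef) (hσ : σ.PosSemidef) (hρ0 : ρ ≠ 0)
    (hker : ∀ v, σ *ᵥ v = 0 → ρ *ᵥ v = 0) :
    0 < fid ρ σ ∧
      -2 * logb 2 (fid ρ σ / ρ.trace.re) ≤ (ρ * (mlog ρ - mlog σ)).trace.re / ρ.trace.re := by
  classical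
  have hT := hρ.1.re_trace_eq_sum_eigenOverlap_mul hσ.1
  have hS : (matSqrt ρ * matSqrt σ).trace.re = ∑ k : ι × ι,
      hρ.1.eigenOverlap hσ.1 k.1 k.2 * √(hρ.1.eigenvalues k.1) * √(hσ.1.eigenvalues k.2) := by
    rw [matSqrt_eq_cfc hρ, matSqrt_eq_cfc hσ, IsHermitian.re_trace_cfc_mul_cfc]
  have hD := re_trace_mul_sub_mlog hρ.1 hσ.1
  set c := hρ.1.eigenOverlap hσ.1
  set p := hρ.1.eigenvalues
  set q := hσ.1.eigenvalues
  have hc : ∀ k : ι × ι, 0 ≤ c k.1 k.2 := fun _ => sq_nonneg _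
  have hp : ∀ k : ι × ι, 0 ≤ p k.1 := fun _ => hρ.eigenvalues_nonneg _
  have hq : ∀ k : ι × ι, 0 ≤ q k.2 := fun _ => hσ.eigenvalues_nonneg _
  have hpq : ∀ k : ι × ι, q k.2 = 0 → c k.1 k.2 * p k.1 = 0 := fun k hk => by
    rw [mul_comm]
    exact hρ.1.eigenvalues_mul_eigenOverlap_eq_zero hσ.1 hker hk
  have hT0 := hρ.re_trace_pos hρ0
  have hS0 : 0 < (matSqrt ρ * matSqrt σ).trace.re :=
    hS ▸ sum_mul_sqrt_mul_sqrt_pos hc hp hq hpq (hT ▸ hT0)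
  have hSF : (matSqrt ρ * matSqrt σ).trace.re ≤ fid ρ σ := re_trace_le_traceNorm _
  have hbound : -2 * ρ.trace.re * log ((matSqrt ρ * matSqrt σ).trace.re / ρ.trace.re) ≤
      (ρ * (mlog ρ - mlog σ)).trace.re * log 2 := by
    rw [hT, hS, hD, div_mul_cancel₀ _ (log_pos one_lt_two).ne']
    exact neg_two_mul_log_le_sum_mul_log_sub_log hc hp hq hpq (hT ▸ hT0)
  have hlog : log ((matSqrt ρ * matSqrt σ).trace.re / ρ.trace.re) ≤ log (fid ρ σ / ρ.trace.re) :=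
    log_le_log (div_pos hS0 hT0) (div_le_div_of_nonneg_right hSF hT0.le)
  refine ⟨hS0.trans_le hSF, ?_⟩
  calc -2 * logb 2 (fid ρ σ / ρ.trace.re)
      = -2 * ρ.trace.re * log (fid ρ σ / ρ.trace.re) / log 2 / ρ.trace.re := by
        rw [logb]
        field_simp
    _ ≤ (ρ * (mlog ρ - mlog σ)).trace.re * log 2 / log 2 / ρ.trace.re := by
        gcongr ?_ / _ / _
        linarith [mul_le_mul_of_nonneg_left hlog (by linarith : 0 ≤ 2 * ρ.trace.re)]
    _ = (ρ * (mlog ρ - mlog σ)).trace.re / ρ.trace.re := by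
        rw [mul_div_cancel_right₀ _ (log_pos one_lt_two).ne']

theorem relEnt_ge_fidelity_bound_general
    {ι : Type*} [Fintype ι]
    (ρ σ : Matrix ι ι ℂ) (hρ : ρ.PosSemidef) (hσ : σ.PosSemidef)
    (hρ0 : ρ ≠ 0) :
    (if 0 < fid ρ σ then (((-2) * Real.logb 2 (fid ρ σ / ρ.trace.re) : ℝ) : EReal) else ⊤) ≤
      relEnt ρ σ := by
  by_cases hker : ∀ v : ι → ℂ, σ *ᵥ v = 0 → ρ *ᵥ v = 0
  · obtain ⟨hF, hle⟩ := neg_two_mul_logb_fid_div_le hρ hσ hρ0 hker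
    rw [relEnt, if_pos hker, if_pos hF]
    exact EReal.coe_le_coe_iff.mpr hle
  · rw [relEnt, if_neg hker]
    exact le_top

/-- `D(ρ‖σ) ≥ -2 log₂(F(ρ,σ)/tr ρ)` (the right-hand side being `+∞` when the
fidelity vanishes). -/
theorem relEnt_ge_fidelity_bound
    {ι : Type*} [Fintype ι]
    (ρ σ : Matrix ι ι ℂ) (hρ : ρ.PosSemidef) (hσ : σ.PosSemidef)
    (hρ0 : ρ ≠ 0) (hσ0 : σ ≠ 0) :
    (if 0 < fid ρ σ then (((-2) * Real.logb 2 (fid ρ σ / ρ.trace.re) : ℝ) : EReal) else ⊤) ≤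
      relEnt ρ σ :=
  relEnt_ge_fidelity_bound_general ρ σ hρ hσ hρ0

end QMarkov
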